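/- arXiv:1303.7245 — 2 statements merged into one kernel-verified Lean document; each statement's English description precedes it below -/
import Mathlib

section
/- For the inner product on polynomials in n variables defined by ⟨p, q⟩ = Σ_m m! p_m q_m (where p = Σ_ℓ p_ℓ x^ℓ, q = Σ_m q_m x^m, and m! = m₁!⋯mₙ! for multi-index m), and for any linear map T ∈ gl(n, ℝ) with adjoint T* with respect to the standard inner product on ℝⁿ, one has ⟨p ∘ T, q⟩ = ⟨p, q ∘ T*⟩ for all polynomials p, q. -/
/-!
Multiplication by `X i` is adjoint to `∂/∂xᵢ` for this inner product, since
`(m + eᵢ)! = (mᵢ + 1) m!`. Inducting on `p`, the case `p * X i` reduces through this adjointness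
to the chain rule `∂ᵢ (q ∘ Tᵀ) = Σⱼ Tᵢⱼ (∂ⱼ q) ∘ Tᵀ`, and the constant case holds because
`q ∘ Tᵀ` has the same constant term as `q`.
-/

open MvPolynomial Matrix

/-- The inner product ⟨p,q⟩ = Σ_m m! p_m q_m on real polynomials in n variables. -/
noncomputable def polyInner {n : ℕ} (p q : MvPolynomial (Fin n) ℝ) : ℝ :=
  ∑ m ∈ p.support ∪ q.support,
    (∏ i, ((m i).factorial : ℝ)) * p.coeff m * q.coeff m

/-- Composition of a polynomial with a linear map: x ↦ p (T x). -/
noncomputable def polyComp {n : ℕ} (p : MvPolynomial (Fin n) ℝ)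
    (T : Matrix (Fin n) (Fin n) ℝ) : MvPolynomial (Fin n) ℝ :=
  aeval (fun i => ∑ j, C (T i j) * X j) p

open Finset

theorem Finsupp.prod_factorial_add_single {σ : Type*} [Fintype σ] [DecidableEq σ]
    (m : σ →₀ ℕ) (i : σ) :
    ∏ j, ((m + Finsupp.single i 1 : σ →₀ ℕ) j).factorial = (m i + 1) * ∏ j, (m j).factorial := by
  have h : ∀ j, ((m + Finsupp.single i 1 : σ →₀ ℕ) j).factorial
      = (if j = i then m i + 1 else 1) * (m j).factorial := by
    intro j
    rcases eq_or_ne j i with rfl | hj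
    · simp [Nat.factorial_succ]
    · simp [hj]
  simp_rw [h, prod_mul_distrib, Fintype.prod_ite_eq']

namespace MvPolynomial

variable {σ τ R : Type*} [CommSemiring R]

theorem constantCoeff_aeval_of_constantCoeff_eq_zero (f : σ → MvPolynomial τ R)
    (hf : ∀ i, constantCoeff (f i) = 0) (q : MvPolynomial σ R) :
    constantCoeff (aeval f q) = constantCoeff q := by
  induction q using MvPolynomial.induction_on with
  | C a => simp
  | add p q hp hq => rw [map_add, map_add, map_add, hp, hq]
  | mul_X p k hp => rw [map_mul, map_mul, map_mul, hp, aeval_X, hf, constantCoeff_X]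

theorem pderiv_aeval [Fintype σ] [DecidableEq σ] (f : σ → MvPolynomial τ R) (i : τ)
    (q : MvPolynomial σ R) :
    pderiv i (aeval f q) = ∑ j, pderiv i (f j) * aeval f (pderiv j q) := by
  induction q using MvPolynomial.induction_on with
  | C a => simp
  | add p q hp hq => simp only [map_add, hp, hq, mul_add, sum_add_distrib]
  | mul_X p k hp =>
    simp only [map_mul, aeval_X, Derivation.leibniz, hp, pderiv_X, smul_eq_mul, map_add, mul_add,
      sum_add_distrib, Pi.single_apply, apply_ite (aeval f), map_zero, mul_ite, mul_one,
      mul_zero, sum_ite_eq, mem_univ, if_true, mul_sum]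
    exact congr_arg₂ (· + ·) (mul_comm _ _) (sum_congr rfl fun j _ => mul_left_comm _ _ _)

theorem pderiv_sum_C_mul_X [Fintype σ] (a : σ → R) (i : σ) :
    pderiv i (∑ j, C (a j) * X j) = C (a i) := by
  classical
  simp [pderiv_X, Pi.single_apply]

end MvPolynomial

variable {n : ℕ}

section polyInner

theorem polyInner_eq_sum_of_support_subset {p q : MvPolynomial (Fin n) ℝ}
    {s : Finset (Fin n →₀ ℕ)} (hs : p.support ⊆ s) :
    polyInner p q = ∑ m ∈ s, (∏ i, ((m i).factorial : ℝ)) * p.coeff m * q.coeff m := by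
  have hvanish : ∀ m ∉ p.support, (∏ i, ((m i).factorial : ℝ)) * p.coeff m * q.coeff m = 0 :=
    fun m hm => by rw [notMem_support_iff.mp hm]; ring
  rw [polyInner, ← sum_subset subset_union_left fun m _ hm => hvanish m hm,
    sum_subset hs fun m _ hm => hvanish m hm]

theorem polyInner_eq_sum_support (p q : MvPolynomial (Fin n) ℝ) :
    polyInner p q = ∑ m ∈ p.support, (∏ i, ((m i).factorial : ℝ)) * p.coeff m * q.coeff m :=
  polyInner_eq_sum_of_support_subset subset_rfl

theorem polyInner_comm (p q : MvPolynomial (Fin n) ℝ) : polyInner p q = polyInner q p := by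
  rw [polyInner, polyInner, union_comm]
  exact sum_congr rfl fun m _ => by ring

theorem polyInner_add_right (p q r : MvPolynomial (Fin n) ℝ) :
    polyInner p (q + r) = polyInner p q + polyInner p r := by
  simp only [polyInner_eq_sum_support, coeff_add, mul_add, sum_add_distrib]

theorem polyInner_add_left (p q r : MvPolynomial (Fin n) ℝ) :
    polyInner (p + q) r = polyInner p r + polyInner q r := by
  rw [polyInner_comm, polyInner_add_right, polyInner_comm r, polyInner_comm r]

theorem polyInner_C_mul_right (c : ℝ) (p q : MvPolynomial (Fin n) ℝ) :
    polyInner p (C c * q) = c * polyInner p q := by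
  simp only [polyInner_eq_sum_support, coeff_C_mul, mul_sum]
  exact sum_congr rfl fun m _ => by ring

theorem polyInner_C_mul_left (c : ℝ) (p q : MvPolynomial (Fin n) ℝ) :
    polyInner (C c * p) q = c * polyInner p q := by
  rw [polyInner_comm, polyInner_C_mul_right, polyInner_comm]

theorem polyInner_sum_right {ι : Type*} (s : Finset ι) (p : MvPolynomial (Fin n) ℝ)
    (f : ι → MvPolynomial (Fin n) ℝ) :
    polyInner p (∑ j ∈ s, f j) = ∑ j ∈ s, polyInner p (f j) :=
  map_sum (AddMonoidHom.mk' (polyInner p) (polyInner_add_right p)) f s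

theorem polyInner_sum_left {ι : Type*} (s : Finset ι) (f : ι → MvPolynomial (Fin n) ℝ)
    (q : MvPolynomial (Fin n) ℝ) :
    polyInner (∑ j ∈ s, f j) q = ∑ j ∈ s, polyInner (f j) q := by
  simp only [polyInner_comm _ q, polyInner_sum_right]

theorem polyInner_C_left (a : ℝ) (q : MvPolynomial (Fin n) ℝ) :
    polyInner (C a) q = a * constantCoeff q := by
  have hsupp : (C a : MvPolynomial (Fin n) ℝ).support ⊆ {0} := support_monomial_subset
  rw [polyInner_eq_sum_of_support_subset hsupp, sum_singleton]
  simp [constantCoeff_eq]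

theorem polyInner_X_mul_left (i : Fin n) (p q : MvPolynomial (Fin n) ℝ) :
    polyInner (X i * p) q = polyInner p (pderiv i q) := by
  rw [polyInner_eq_sum_support, polyInner_eq_sum_support, support_X_mul, sum_map]
  refine sum_congr rfl fun m _ => ?_
  have hfact : ∏ j, (((m + Finsupp.single i 1 : Fin n →₀ ℕ) j).factorial : ℝ)
      = (m i + 1) * ∏ j, ((m j).factorial : ℝ) := by
    exact_mod_cast Finsupp.prod_factorial_add_single m i
  rw [addLeftEmbedding_apply, coeff_X_mul, coeff_pderiv, add_comm (Finsupp.single i 1), hfact]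
  ring

theorem polyInner_sum_C_mul_X_mul_left (a : Fin n → ℝ) (p q : MvPolynomial (Fin n) ℝ) :
    polyInner ((∑ j, C (a j) * X j) * p) q = ∑ j, a j * polyInner p (pderiv j q) := by
  simp only [sum_mul, polyInner_sum_left, mul_assoc, polyInner_C_mul_left, polyInner_X_mul_left]

end polyInner

section polyComp

theorem polyComp_C (a : ℝ) (T : Matrix (Fin n) (Fin n) ℝ) : polyComp (C a) T = C a :=
  aeval_C _ a

theorem polyComp_add (p q : MvPolynomial (Fin n) ℝ) (T : Matrix (Fin n) (Fin n) ℝ) :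
    polyComp (p + q) T = polyComp p T + polyComp q T :=
  map_add _ p q

theorem polyComp_mul_X (p : MvPolynomial (Fin n) ℝ) (i : Fin n) (T : Matrix (Fin n) (Fin n) ℝ) :
    polyComp (p * X i) T = (∑ j, C (T i j) * X j) * polyComp p T := by
  rw [polyComp, map_mul, aeval_X, mul_comm]
  rfl

theorem constantCoeff_polyComp (q : MvPolynomial (Fin n) ℝ) (T : Matrix (Fin n) (Fin n) ℝ) :
    constantCoeff (polyComp q T) = constantCoeff q :=
  constantCoeff_aeval_of_constantCoeff_eq_zero _ (fun i => by simp) q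

theorem pderiv_polyComp (i : Fin n) (q : MvPolynomial (Fin n) ℝ) (T : Matrix (Fin n) (Fin n) ℝ) :
    pderiv i (polyComp q T) = ∑ j, C (T j i) * polyComp (pderiv j q) T := by
  simp only [polyComp, pderiv_aeval, pderiv_sum_C_mul_X]

end polyComp

theorem inner_comp_adjoint {n : ℕ} (T : Matrix (Fin n) (Fin n) ℝ)
    (p q : MvPolynomial (Fin n) ℝ) :
    polyInner (polyComp p T) q = polyInner p (polyComp q Tᵀ) := by
  induction p using MvPolynomial.induction_on generalizing q with
  | C a => rw [polyComp_C, polyInner_C_left, polyInner_C_left, constantCoeff_polyComp]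
  | add p r hp hr => rw [polyComp_add, polyInner_add_left, polyInner_add_left, hp, hr]
  | mul_X p i hp =>
    calc polyInner (polyComp (p * X i) T) q
        = ∑ j, T i j * polyInner (polyComp p T) (pderiv j q) := by
          rw [polyComp_mul_X, polyInner_sum_C_mul_X_mul_left]
      _ = ∑ j, T i j * polyInner p (polyComp (pderiv j q) Tᵀ) := by simp only [hp]
      _ = polyInner p (pderiv i (polyComp q Tᵀ)) := by
          simp only [pderiv_polyComp, polyInner_sum_right, polyInner_C_mul_right, transpose_apply]
      _ = polyInner (p * X i) (polyComp q Tᵀ) := by rw [mul_comm, polyInner_X_mul_left]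
end

section
/- For the vector field V = Σ_{j=1}^{n} x_j ∂/∂x_{j+1} on ℝ^{n+1} (with x_{n+1} := u and convention x₀ = 0), each polynomial ℓ_i(x) = ½ x_i² + Σ_{k=1}^{K} (−1)^k x_{i−k} x_{i+k} is a first integral of V, for 2 ≤ i ≤ r+1, where K is chosen so all indices i−k ≥ 1 and i+k ≤ n+1 (i.e., K = min(i−1, n+1−i)), r = n/2 if n even and r = (n−1)/2 if n odd. -/
open MvPolynomial

/-- The vector field V = Σ_{j=1}^{n} x_j ∂/∂x_{j+1} of the characteristic system
of the Brunovský form, acting on polynomials in the variables x₁,…,xₙ,u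
(with u = x_{n+1}), as a differential operator. -/
noncomputable def Vop (n : ℕ) (p : MvPolynomial ℕ ℝ) : MvPolynomial ℕ ℝ :=
  ∑ j ∈ Finset.Icc 1 n, X j * pderiv (j + 1) p

/-- ℓ_i = ½ x_i² + Σ_{k=1}^{K} (−1)^k x_{i−k} x_{i+k}, K = min(i−1, n+1−i). -/
noncomputable def ell (n i : ℕ) : MvPolynomial ℕ ℝ :=
  C (1/2 : ℝ) * X i ^ 2 +
    ∑ k ∈ Finset.Icc 1 (min (i - 1) (n + 1 - i)),
      C ((-1 : ℝ) ^ k) * X (i - k) * X (i + k)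

/-!
V lowers every index by one: V x_m = x_{m-1} for m ≤ n + 1, with x₀ = 0. Hence, writing
Q_k = x_{i-1-k} x_{i+k}, we get V(½ x_i²) = Q₀ and V(x_{i-k} x_{i+k}) = Q_k + Q_{k-1}, so the
alternating sum V(ℓ_i) telescopes to ±Q_{i-1} = ±x₀ x_{2i-1} = 0. The bound i ≤ n/2 + 1 makes
K = i - 1 and keeps every index at most n + 1, where V does act as a shift.
-/

open Finset

theorem add_sum_Icc_neg_one_pow_smul_add_pred {R M : Type*} [CommRing R] [AddCommGroup M]
    [Module R M] (Q : ℕ → M) (K : ℕ) :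
    Q 0 + ∑ k ∈ Icc 1 K, (-1 : R) ^ k • (Q k + Q (k - 1)) = (-1 : R) ^ K • Q K := by
  induction K with
  | zero => simp
  | succ K ih =>
    rw [sum_Icc_succ_top (by omega), ← add_assoc, ih, Nat.add_sub_cancel, pow_succ]
    module

/-- The coordinate `x_m`, with the convention `x₀ = 0`. -/
noncomputable def coord (m : ℕ) : MvPolynomial ℕ ℝ := if m = 0 then 0 else X m

theorem coord_of_ne_zero {m : ℕ} (hm : m ≠ 0) : coord m = X m := if_neg hm

noncomputable def vectorField (n : ℕ) : Derivation ℝ (MvPolynomial ℕ ℝ) (MvPolynomial ℕ ℝ) :=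
  ∑ j ∈ Icc 1 n, (X j : MvPolynomial ℕ ℝ) • pderiv (j + 1)

theorem vectorField_apply (n : ℕ) (p : MvPolynomial ℕ ℝ) : vectorField n p = Vop n p := by
  rw [vectorField, Vop, ← Derivation.coeFnAddMonoidHom_apply, map_sum, Finset.sum_apply]
  rfl

theorem vectorField_X {n m : ℕ} (hm : m ≤ n + 1) : vectorField n (X m) = coord (m - 1) := by
  have hterm : ∀ j ∈ Icc 1 n,
      (X j : MvPolynomial ℕ ℝ) * pderiv (j + 1) (X m) = if m - 1 = j then X j else 0 := by
    intro j hj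
    rw [mem_Icc] at hj
    rw [pderiv_X, Pi.single_apply]
    split_ifs <;> first | omega | simp
  rw [vectorField_apply, Vop, sum_congr rfl hterm, sum_ite_eq, coord]
  simp only [mem_Icc]
  split_ifs <;> first | rfl | omega

theorem vectorField_X_mul_X {n a b : ℕ} (ha : a ≤ n + 1) (hb : b ≤ n + 1) :
    vectorField n (X a * X b) = X a * coord (b - 1) + X b * coord (a - 1) := by
  rw [Derivation.leibniz, vectorField_X ha, vectorField_X hb, smul_eq_mul, smul_eq_mul]

theorem vectorField_half_X_sq {n i : ℕ} (hi : i ≤ n + 1) :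
    vectorField n (C (1 / 2 : ℝ) * X i ^ 2) = coord (i - 1) * X i := by
  rw [C_mul', Derivation.map_smul, sq, vectorField_X_mul_X hi hi, mul_comm, ← two_smul ℝ,
    smul_smul]
  norm_num

theorem ell_i_first_integral_general (n i : ℕ) (hi₂ : i ≤ n / 2 + 1) :
    Vop n (ell n i) = 0 := by
  set Q : ℕ → MvPolynomial ℕ ℝ := fun k => coord (i - 1 - k) * X (i + k)
  have hK : min (i - 1) (n + 1 - i) = i - 1 := by omega
  have hterm : ∀ k ∈ Icc 1 (i - 1), vectorField n (C ((-1 : ℝ) ^ k) * X (i - k) * X (i + k)) =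
      (-1 : ℝ) ^ k • (Q k + Q (k - 1)) := by
    intro k hk
    rw [mem_Icc] at hk
    simp only [Q]
    rw [mul_assoc, C_mul', Derivation.map_smul, vectorField_X_mul_X (by omega) (by omega),
      coord_of_ne_zero (show i + k - 1 ≠ 0 by omega),
      coord_of_ne_zero (show i - 1 - (k - 1) ≠ 0 by omega), show i - 1 - (k - 1) = i - k by omega,
      show i + (k - 1) = i + k - 1 by omega, show i - k - 1 = i - 1 - k by omega]
    congr 1
    ring
  rw [← vectorField_apply, ell, hK, map_add, vectorField_half_X_sq (by omega), map_sum,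
    sum_congr rfl hterm, show coord (i - 1) * X i = Q 0 from rfl,
    add_sum_Icc_neg_one_pow_smul_add_pred]
  simp [Q, coord]

theorem ell_i_first_integral (n i : ℕ) (hi₁ : 2 ≤ i) (hi₂ : i ≤ n / 2 + 1) :
    Vop n (ell n i) = 0 :=
  ell_i_first_integral_general n i hi₂
end
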